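/- In the two-group measurement-error model without group information, the expected residual for group g=0 equals (P[g=0] - 1)(Λβ)^T Δμ_z, where Δμ_z = E[z | g=1] - E[z | g=0] and Λ = (Σ_z + Σ_u)^{-1}Σ_u, for the population least-squares predictor of y from x = z + u. -/

import Mathlib

/-!
The residual is `y - ŷ = (Λβ)ᵀ(z - E z) - ((I - Λ)β)ᵀu`. Conditioning on `g = 0` kills the
`u`-term, since `u` is centred and independent of `g`. By the law of total expectation
`E z = p₀ E[z | g = 0] + (1 - p₀) E[z | g = 1]`, hence `E[z | g = 0] - E z = (p₀ - 1) Δμ_z`.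
-/

open MeasureTheory ProbabilityTheory Matrix

/-- Mean vector of a random vector. -/
noncomputable def meanV {Ω : Type*} [MeasurableSpace Ω] (P : Measure Ω) {d : ℕ}
    (z : Ω → Fin d → ℝ) : Fin d → ℝ := fun i => ∫ ω, z ω i ∂P

/-- Covariance matrix of a random vector. -/
noncomputable def covM {Ω : Type*} [MeasurableSpace Ω] (P : Measure Ω) {d : ℕ}
    (z : Ω → Fin d → ℝ) : Matrix (Fin d) (Fin d) ℝ :=
  Matrix.of fun i j => ∫ ω, (z ω i - meanV P z i) * (z ω j - meanV P z j) ∂P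

section

variable {Ω : Type*} [MeasurableSpace Ω] {μ : Measure Ω}

theorem setIntegral_eq_measureReal_mul_integral_cond [IsFiniteMeasure μ] (s : Set Ω)
    (f : Ω → ℝ) : ∫ ω in s, f ω ∂μ = μ.real s * ∫ ω, f ω ∂μ[|s] := by
  by_cases hs : μ s = 0
  · simp [Measure.restrict_eq_zero.2 hs, cond_eq_zero_of_meas_eq_zero hs]
  · rw [ProbabilityTheory.cond, integral_smul_measure, ENNReal.toReal_inv, smul_eq_mul,
      ← measureReal_def, mul_inv_cancel_left₀ ((measureReal_ne_zero_iff).2 hs)]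

theorem integral_cond_preimage_of_indepFun [IsFiniteMeasure μ] {β : Type*}
    [MeasurableSpace β] {X : Ω → β} {Y : Ω → ℝ} (hXY : IndepFun X Y μ) (hX : Measurable X)
    (hY : AEStronglyMeasurable Y μ) {t : Set β} (ht : MeasurableSet t) (hμt : μ (X ⁻¹' t) ≠ 0) :
    ∫ ω, Y ω ∂μ[|X ⁻¹' t] = ∫ ω, Y ω ∂μ := by
  have hset : ∫ ω in X ⁻¹' t, Y ω ∂μ = μ.real (X ⁻¹' t) * ∫ ω, Y ω ∂μ :=
    Indep.setIntegral_eq_mul (f := id) hX.comap_le hXY hY.aemeasurable ⟨t, ht, rfl⟩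
      aestronglyMeasurable_id
  rw [setIntegral_eq_measureReal_mul_integral_cond] at hset
  exact mul_left_cancel₀ ((measureReal_ne_zero_iff).2 hμt) hset

theorem MeasureTheory.Integrable.cond {f : Ω → ℝ} (hf : Integrable f μ) (s : Set Ω) :
    Integrable f μ[|s] := by
  by_cases hs : μ s = 0
  · simp [cond_eq_zero_of_meas_eq_zero hs]
  · exact hf.restrict.smul_measure (ENNReal.inv_ne_top.2 hs)

variable {d : ℕ} {z : Ω → Fin d → ℝ}

theorem meanV_eq_smul_add_smul_compl [IsFiniteMeasure μ] {s : Set Ω} (hs : MeasurableSet s)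
    (hz : ∀ i, Integrable (fun ω => z ω i) μ) :
    meanV μ z = μ.real s • meanV μ[|s] z + μ.real sᶜ • meanV μ[|sᶜ] z := by
  funext i
  simp only [meanV, Pi.add_apply, Pi.smul_apply, smul_eq_mul]
  rw [← setIntegral_eq_measureReal_mul_integral_cond,
    ← setIntegral_eq_measureReal_mul_integral_cond, integral_add_compl hs (hz i)]

theorem integrable_dotProduct (c : Fin d → ℝ) (hz : ∀ i, Integrable (fun ω => z ω i) μ) :
    Integrable (fun ω => c ⬝ᵥ z ω) μ :=
  integrable_finsetSum _ fun i _ => (hz i).const_mul (c i)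

theorem integral_dotProduct (c : Fin d → ℝ) (hz : ∀ i, Integrable (fun ω => z ω i) μ) :
    ∫ ω, c ⬝ᵥ z ω ∂μ = c ⬝ᵥ meanV μ z := by
  simp only [dotProduct, meanV]
  rw [integral_finsetSum _ fun i _ => (hz i).const_mul (c i)]
  simp only [integral_const_mul]

theorem integral_dotProduct_sub_dotProduct_sub_const [IsProbabilityMeasure μ]
    {u : Ω → Fin d → ℝ} (a b m : Fin d → ℝ) (hz : ∀ i, Integrable (fun ω => z ω i) μ)
    (hu : ∀ i, Integrable (fun ω => u ω i) μ) :
    ∫ ω, (a ⬝ᵥ z ω - b ⬝ᵥ u ω - a ⬝ᵥ m) ∂μ = a ⬝ᵥ (meanV μ z - m) - b ⬝ᵥ meanV μ u := by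
  have haz := integrable_dotProduct a hz
  have hbu := integrable_dotProduct b hu
  rw [integral_sub (f := fun ω => _ - _) (haz.sub hbu) (integrable_const _),
    integral_sub haz hbu, integral_dotProduct a hz, integral_dotProduct b hu, integral_const,
    probReal_univ, one_smul, dotProduct_sub]
  ring

end

theorem dotProduct_add_sub_predictor {n : Type*} [Fintype n] [DecidableEq n]
    (Λ : Matrix n n ℝ) (β z u m : n → ℝ) (α : ℝ) :
    β ⬝ᵥ z + α - (((1 - Λ) *ᵥ β) ⬝ᵥ (z + u) + (Λ *ᵥ β) ⬝ᵥ m + α) =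
      (Λ *ᵥ β) ⬝ᵥ z - ((1 - Λ) *ᵥ β) ⬝ᵥ u - (Λ *ᵥ β) ⬝ᵥ m := by
  simp only [sub_mulVec, one_mulVec, sub_dotProduct, dotProduct_add]
  ring

theorem stmt_4_general {Ω : Type*} [MeasurableSpace Ω] (P : Measure Ω) [IsProbabilityMeasure P]
    {d : ℕ} (z u x : Ω → Fin d → ℝ) (g y yhat : Ω → ℝ) (β : Fin d → ℝ) (α : ℝ)
    (Λ : Matrix (Fin d) (Fin d) ℝ) (Δμz : Fin d → ℝ)
    (hgval : ∀ ω, g ω = 0 ∨ g ω = 1)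
    (hgmeas : Measurable g)
    (hppos : 0 < P (g ⁻¹' {1}) ∧ P (g ⁻¹' {1}) < 1)
    (hx : ∀ ω, x ω = fun i => z ω i + u ω i)
    (hy : ∀ ω, y ω = β ⬝ᵥ z ω + α)
    (hindep : IndepFun (fun ω => (z ω, g ω)) u P)
    (hzL2 : ∀ i, MemLp (fun ω => z ω i) 2 P)
    (huL2 : ∀ i, MemLp (fun ω => u ω i) 2 P)
    (hu0 : ∀ i, ∫ ω, u ω i ∂P = 0)
    (hΔ : ∀ i, Δμz i = (∫ ω, z ω i ∂(ProbabilityTheory.cond P (g ⁻¹' {1}))) -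
      ∫ ω, z ω i ∂(ProbabilityTheory.cond P (g ⁻¹' {0})))
    (hyhat : ∀ ω, yhat ω = ((1 - Λ) *ᵥ β) ⬝ᵥ x ω + (Λ *ᵥ β) ⬝ᵥ meanV P z + α) :
    ∫ ω, (y ω - yhat ω) ∂(ProbabilityTheory.cond P (g ⁻¹' {0})) =
      ((P (g ⁻¹' {0})).toReal - 1) * ((Λ *ᵥ β) ⬝ᵥ Δμz) := by
  set A := g ⁻¹' {0}
  have hAmeas : MeasurableSet A := hgmeas (measurableSet_singleton 0)
  have hAcompl : Aᶜ = g ⁻¹' {1} := by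
    ext ω; rcases hgval ω with h | h <;> simp [A, h]
  have hPA : P A ≠ 0 := by
    rw [← compl_compl A, prob_compl_eq_one_sub hAmeas.compl, hAcompl]
    exact (tsub_pos_of_lt hppos.2).ne'
  have hz i : Integrable (fun ω => z ω i) P := (hzL2 i).integrable one_le_two
  have hu i : Integrable (fun ω => u ω i) P := (huL2 i).integrable one_le_two
  have hmean_u : meanV P[|A] u = 0 := funext fun i =>
    (integral_cond_preimage_of_indepFun (hindep.comp measurable_snd (measurable_pi_apply i))
      hgmeas (hu i).aestronglyMeasurable (measurableSet_singleton 0) hPA).trans (hu0 i)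
  have hresidual ω : y ω - yhat ω =
      (Λ *ᵥ β) ⬝ᵥ z ω - ((1 - Λ) *ᵥ β) ⬝ᵥ u ω - (Λ *ᵥ β) ⬝ᵥ meanV P z := by
    rw [hy, hyhat, hx]
    exact dotProduct_add_sub_predictor Λ β (z ω) (u ω) (meanV P z) α
  have hΔ' : Δμz = meanV P[|Aᶜ] z - meanV P[|A] z := funext fun i => by
    rw [hΔ, hAcompl]; rfl
  have := cond_isProbabilityMeasure hPA
  simp_rw [hresidual]
  rw [integral_dotProduct_sub_dotProduct_sub_const _ _ _ (fun i => (hz i).cond A)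
      (fun i => (hu i).cond A), hmean_u, meanV_eq_smul_add_smul_compl hAmeas hz, hΔ',
    probReal_compl_eq_one_sub hAmeas, ← measureReal_def]
  simp only [dotProduct_add, dotProduct_smul, dotProduct_sub, dotProduct_zero, smul_eq_mul]
  ring

/-- Two-group measurement-error model without group information: the expected
residual for group `g = 0` equals `(P[g=0] - 1)(Λβ)ᵀΔμ_z`. -/
theorem stmt_4 {Ω : Type*} [MeasurableSpace Ω] (P : Measure Ω) [IsProbabilityMeasure P]
    {d : ℕ} (z u x : Ω → Fin d → ℝ) (g y yhat : Ω → ℝ) (β : Fin d → ℝ) (α : ℝ)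
    (Λ : Matrix (Fin d) (Fin d) ℝ) (Δμz : Fin d → ℝ)
    (hgval : ∀ ω, g ω = 0 ∨ g ω = 1)
    (hgmeas : Measurable g)
    (hppos : 0 < P (g ⁻¹' {1}) ∧ P (g ⁻¹' {1}) < 1)
    (hx : ∀ ω, x ω = fun i => z ω i + u ω i)
    (hy : ∀ ω, y ω = β ⬝ᵥ z ω + α)
    (hindep : IndepFun (fun ω => (z ω, g ω)) u P)
    (hzL2 : ∀ i, MemLp (fun ω => z ω i) 2 P)
    (huL2 : ∀ i, MemLp (fun ω => u ω i) 2 P)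
    (hu0 : ∀ i, ∫ ω, u ω i ∂P = 0)
    (hinv : IsUnit (covM P z + covM P u).det)
    (hΛ : Λ = (covM P z + covM P u)⁻¹ * covM P u)
    (hΔ : ∀ i, Δμz i = (∫ ω, z ω i ∂(ProbabilityTheory.cond P (g ⁻¹' {1}))) -
      ∫ ω, z ω i ∂(ProbabilityTheory.cond P (g ⁻¹' {0})))
    (hyhat : ∀ ω, yhat ω = ((1 - Λ) *ᵥ β) ⬝ᵥ x ω + (Λ *ᵥ β) ⬝ᵥ meanV P z + α) :
    ∫ ω, (y ω - yhat ω) ∂(ProbabilityTheory.cond P (g ⁻¹' {0})) =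
      ((P (g ⁻¹' {0})).toReal - 1) * ((Λ *ᵥ β) ⬝ᵥ Δμz) :=
  stmt_4_general P z u x g y yhat β α Λ Δμz hgval hgmeas hppos hx hy hindep hzL2 huL2 hu0 hΔ hyhat
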